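/- arXiv:1909.02995 — 3 statements merged into one kernel-verified Lean document; each statement's English description precedes it below -/
import Mathlib

section
/- Let f : ℝ → ℝ be a measurable function and suppose there exist positive real constants A and λ such that |f(t)| ≤ A·exp(-λ|t|) for all real t. Then the Fourier transform F(x) = ∫_ℝ f(t)·exp(-2πi·x·t) dt extends to a holomorphic function of x on the horizontal strip {x ∈ ℂ : |Im x| < λ/(2π)}. -/
/-!
Write `f = f⁺ - f⁻` and let `μ±` be the finite measures with densities `f±`. Then
`∫ f(t) e^{zt} dt` is the difference of the complex moment generating functions of `μ+` and `μ-`,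
which are holomorphic on the vertical strip over the interior of the set of `s` for which
`e^{st}` is `μ±`-integrable; by the decay bound that set contains `(-λ, λ)`. The Fourier
transform is this Laplace transform at `z = -2πix`, and `Re(-2πix) = 2π Im x`.
-/

open MeasureTheory Complex Set Filter ProbabilityTheory

lemma integrable_exp_neg_mul_abs {c : ℝ} (hc : 0 < c) :
    Integrable fun t : ℝ => Real.exp (-c * |t|) := by
  refine (by fun_prop : Continuous fun t : ℝ => Real.exp (-c * |t|)).locallyIntegrable
    |>.integrable_of_isBigO_atTop_of_norm_isNegInvariant (g := fun t => Real.exp (-c * t))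
      (ae_of_all _ fun t => by simp) ?_ ⟨Ioi 0, Ioi_mem_atTop 0, exp_neg_integrableOn_Ioi 0 hc⟩
  refine EventuallyEq.isBigO ?_
  filter_upwards [eventually_ge_atTop 0] with t ht
  rw [abs_of_nonneg ht]

section WithDensityOfReal

variable {g : ℝ → ℝ}

lemma integrable_withDensity_ofReal_iff {E : Type*} [NormedAddCommGroup E] [NormedSpace ℝ E]
    (hg : Measurable g) {h : ℝ → E} :
    Integrable h (volume.withDensity fun t => ENNReal.ofReal (g t)) ↔
      Integrable fun t => max (g t) 0 • h t :=
  integrable_withDensity_iff_integrable_smul' hg.ennreal_ofReal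
    (ae_of_all _ fun _ => ENNReal.ofReal_lt_top)

lemma integral_withDensity_ofReal {E : Type*} [NormedAddCommGroup E] [NormedSpace ℝ E]
    (hg : Measurable g) (h : ℝ → E) :
    ∫ t, h t ∂(volume.withDensity fun t => ENNReal.ofReal (g t)) = ∫ t, max (g t) 0 • h t :=
  integral_withDensity_eq_integral_toReal_smul hg.ennreal_ofReal
    (ae_of_all _ fun _ => ENNReal.ofReal_lt_top) h

lemma Ioo_subset_interior_integrableExpSet_withDensity_ofReal (hg : Measurable g) {A lam : ℝ}
    (hbound : ∀ t, |g t| ≤ A * Real.exp (-lam * |t|)) :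
    Ioo (-lam) lam ⊆
      interior (integrableExpSet id (volume.withDensity fun t => ENNReal.ofReal (g t))) := by
  refine interior_maximal (fun s hs => ?_) isOpen_Ioo
  have hc : 0 < lam - |s| := sub_pos.2 (abs_lt.2 hs)
  refine (integrable_withDensity_ofReal_iff hg).2 <|
    ((integrable_exp_neg_mul_abs hc).const_mul A).mono' (by fun_prop) (ae_of_all _ fun t => ?_)
  have hexp : Real.exp (s * t) ≤ Real.exp (|s| * |t|) :=
    Real.exp_le_exp.2 ((le_abs_self _).trans (abs_mul s t).le)
  calc ‖max (g t) 0 • Real.exp (s * id t)‖ = max (g t) 0 * Real.exp (s * t) := by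
        rw [norm_smul, Real.norm_of_nonneg (le_max_right _ _), Real.norm_of_nonneg (by positivity),
          id]
    _ ≤ (A * Real.exp (-lam * |t|)) * Real.exp (|s| * |t|) :=
        mul_le_mul (max_le ((le_abs_self _).trans (hbound t)) ((abs_nonneg _).trans (hbound t)))
          hexp (by positivity) ((abs_nonneg _).trans (hbound t))
    _ = A * Real.exp (-(lam - |s|) * |t|) := by
        rw [mul_assoc, ← Real.exp_add]; ring_nf

lemma integral_mul_cexp_eq_complexMGF_sub (hg : Measurable g) {z : ℂ}
    (hpos : Integrable (fun t : ℝ => cexp (z * t))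
      (volume.withDensity fun t => ENNReal.ofReal (g t)))
    (hneg : Integrable (fun t : ℝ => cexp (z * t))
      (volume.withDensity fun t => ENNReal.ofReal (-g t))) :
    ∫ t, (g t : ℂ) * cexp (z * t) =
      complexMGF id (volume.withDensity fun t => ENNReal.ofReal (g t)) z -
        complexMGF id (volume.withDensity fun t => ENNReal.ofReal (-g t)) z := by
  have hg_neg : Measurable fun t => -g t := hg.neg
  simp only [complexMGF, id, integral_withDensity_ofReal hg, integral_withDensity_ofReal hg_neg]
  rw [← integral_sub ((integrable_withDensity_ofReal_iff hg).1 hpos)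
    ((integrable_withDensity_ofReal_iff hg_neg).1 hneg)]
  simp_rw [← sub_smul, max_zero_sub_max_neg_zero_eq_self, Complex.real_smul]

end WithDensityOfReal

theorem differentiableOn_integral_mul_cexp {g : ℝ → ℝ} (hg : Measurable g) {A lam : ℝ}
    (hbound : ∀ t, |g t| ≤ A * Real.exp (-lam * |t|)) :
    DifferentiableOn ℂ (fun z : ℂ => ∫ t, (g t : ℂ) * cexp (z * t)) {z | |z.re| < lam} := by
  have hg_neg : Measurable fun t => -g t := hg.neg
  have hbound_neg : ∀ t, |-g t| ≤ A * Real.exp (-lam * |t|) := fun t =>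
    (abs_neg (g t)).trans_le (hbound t)
  have hpos : {z : ℂ | |z.re| < lam} ⊆ {z | z.re ∈ interior (integrableExpSet id
      (volume.withDensity fun t => ENNReal.ofReal (g t)))} := fun z hz =>
    Ioo_subset_interior_integrableExpSet_withDensity_ofReal hg hbound (abs_lt.1 hz)
  have hneg : {z : ℂ | |z.re| < lam} ⊆ {z | z.re ∈ interior (integrableExpSet id
      (volume.withDensity fun t => ENNReal.ofReal (-g t)))} := fun z hz =>
    Ioo_subset_interior_integrableExpSet_withDensity_ofReal hg_neg hbound_neg (abs_lt.1 hz)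
  refine ((differentiableOn_complexMGF.mono hpos).sub (differentiableOn_complexMGF.mono hneg))
    |>.congr fun z hz => integral_mul_cexp_eq_complexMGF_sub hg ?_ ?_
  · exact integrable_cexp_mul_of_re_mem_interior_integrableExpSet (hpos hz)
  · exact integrable_cexp_mul_of_re_mem_interior_integrableExpSet (hneg hz)

theorem fourier_transform_holomorphic_on_strip_general
    (f : ℝ → ℝ) (hf : Measurable f) (A lam : ℝ)
    (hbound : ∀ t : ℝ, |f t| ≤ A * Real.exp (-lam * |t|)) :
    ∃ F : ℂ → ℂ,
      DifferentiableOn ℂ F {x : ℂ | |x.im| < lam / (2 * Real.pi)} ∧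
      ∀ x : ℝ, F (x : ℂ) =
        ∫ t : ℝ, (f t : ℂ) * Complex.exp (-2 * Real.pi * Complex.I * x * t) := by
  have hstrip : MapsTo (fun x : ℂ => -2 * Real.pi * I * x)
      {x : ℂ | |x.im| < lam / (2 * Real.pi)} {z | |z.re| < lam} := fun x hx => by
    have hre : (-2 * Real.pi * I * x).re = 2 * Real.pi * x.im := by simp
    rw [mem_ofPred_eq, hre, abs_mul, abs_of_pos Real.two_pi_pos, ← lt_div_iff₀' Real.two_pi_pos]
    exact hx
  exact ⟨_, (differentiableOn_integral_mul_cexp hf hbound).comp (by fun_prop) hstrip,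
    fun x => rfl⟩

/-- a measurable function with exponential decay has a Fourier
transform that extends holomorphically to the strip `|Im x| < λ/(2π)`. -/
theorem fourier_transform_holomorphic_on_strip
    (f : ℝ → ℝ) (hf : Measurable f) (A lam : ℝ) (hA : 0 < A) (hlam : 0 < lam)
    (hbound : ∀ t : ℝ, |f t| ≤ A * Real.exp (-lam * |t|)) :
    ∃ F : ℂ → ℂ,
      DifferentiableOn ℂ F {x : ℂ | |x.im| < lam / (2 * Real.pi)} ∧
      ∀ x : ℝ, F (x : ℂ) =
        ∫ t : ℝ, (f t : ℂ) * Complex.exp (-2 * Real.pi * Complex.I * x * t) :=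
  fourier_transform_holomorphic_on_strip_general f hf A lam hbound
end

section
/- Consider the Hamiltonian G_ε(q,p,s,S) = H(q, p/s) + F_ε(S) + T·ln(s) on {s > 0}, where F_ε(S) = F(εS). Under the change of variables ρ = p/s, ξ = εS, and time reparameterization dτ = s·dt, Hamilton's equations for G_ε become q' = H₂(q,ρ), ρ' = −H₁(q,ρ) − ε·ρ·F'(ξ), ξ' = ε·(−T + ρ·H₂(q,ρ)), together with s' = ε·s·F'(ξ), where ' denotes d/dτ and H₁, H₂ are the partial derivatives of H in its first and second arguments. -/
/-! Every Hamilton-time derivative of the new coordinates `q`, `ρ = p/s`, `ξ = εS`, `s` has the form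
`(component of the thermostated field)/s`, so the factor `s` contributed by the chain rule through
`dt/dτ = s` cancels exactly. -/

section

variable {𝕜 : Type*} [NontriviallyNormedField 𝕜]

theorem HasDerivAt.comp_of_div {f σ : 𝕜 → 𝕜} {v c τ : 𝕜} (hc : c ≠ 0)
    (hf : HasDerivAt f (v / c) (σ τ)) (hσ : HasDerivAt σ c τ) :
    HasDerivAt (fun τ => f (σ τ)) v τ := by
  have h := hf.comp τ hσ
  rwa [div_mul_cancel₀ v hc] at h

theorem HasDerivAt.div_eq_sub_div {p s : 𝕜 → 𝕜} {a b t : 𝕜} (hp : HasDerivAt p a t)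
    (hs : HasDerivAt s b t) (hst : s t ≠ 0) :
    HasDerivAt (fun t => p t / s t) ((a - p t / s t * b) / s t) t := by
  refine (hp.div hs hst).congr_deriv ?_
  field_simp

end

theorem hoover_reduction_general
    (H : ℝ × ℝ → ℝ) (F : ℝ → ℝ)
    (T ε : ℝ) (q p s S : ℝ → ℝ) (hs : ∀ t, 0 < s t)
    (hq : ∀ t, HasDerivAt q (fderiv ℝ H (q t, p t / s t) (0, 1) / s t) t)
    (hp : ∀ t, HasDerivAt p (-(fderiv ℝ H (q t, p t / s t) (1, 0))) t)
    (hsd : ∀ t, HasDerivAt s (ε * deriv F (ε * S t)) t)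
    (hS : ∀ t, HasDerivAt S
      (fderiv ℝ H (q t, p t / s t) (0, 1) * p t / (s t) ^ 2 - T / s t) t)
    (σ : ℝ → ℝ) (hσ : ∀ τ, HasDerivAt σ (s (σ τ)) τ) :
    let Q : ℝ → ℝ := fun τ => q (σ τ)
    let ρ : ℝ → ℝ := fun τ => p (σ τ) / s (σ τ)
    let ξ : ℝ → ℝ := fun τ => ε * S (σ τ)
    let sτ : ℝ → ℝ := fun τ => s (σ τ)
    ∀ τ,
      HasDerivAt Q (fderiv ℝ H (Q τ, ρ τ) (0, 1)) τ ∧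
      HasDerivAt ρ (-(fderiv ℝ H (Q τ, ρ τ) (1, 0)) - ε * ρ τ * deriv F (ξ τ)) τ ∧
      HasDerivAt ξ (ε * (-T + ρ τ * fderiv ℝ H (Q τ, ρ τ) (0, 1))) τ ∧
      HasDerivAt sτ (ε * sτ τ * deriv F (ξ τ)) τ := by
  dsimp only
  intro τ
  have hst : s (σ τ) ≠ 0 := (hs (σ τ)).ne'
  refine ⟨(hq _).comp_of_div hst (hσ τ), ?_, ?_, ?_⟩
  · have hρ := (hp (σ τ)).div_eq_sub_div (hsd (σ τ)) hst
    refine HasDerivAt.comp_of_div hst (hρ.congr_deriv ?_) (hσ τ)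
    ring
  · have hξ := (hS (σ τ)).const_mul ε
    refine HasDerivAt.comp_of_div (f := fun t => ε * S t) hst (hξ.congr_deriv ?_) (hσ τ)
    ring
  · refine HasDerivAt.comp_of_div hst ((hsd _).congr_deriv ?_) (hσ τ)
    field_simp

/-- Hoover reduction: solutions of Hamilton's equations for
`G_ε(q,p,s,S) = H(q, p/s) + F(εS) + T ln s` on `{s > 0}` become, after the
substitution `ρ = p/s`, `ξ = εS` and the time reparameterization `dt/dτ = s`,
solutions of the thermostated system
`q' = H₂`, `ρ' = −H₁ − ερF'(ξ)`, `ξ' = ε(−T + ρH₂)`, `s' = εsF'(ξ)`. -/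
theorem hoover_reduction
    (H : ℝ × ℝ → ℝ) (F : ℝ → ℝ) (hH : ContDiff ℝ 2 H) (hF : ContDiff ℝ 2 F)
    (T ε : ℝ) (q p s S : ℝ → ℝ) (hs : ∀ t, 0 < s t)
    (hq : ∀ t, HasDerivAt q (fderiv ℝ H (q t, p t / s t) (0, 1) / s t) t)
    (hp : ∀ t, HasDerivAt p (-(fderiv ℝ H (q t, p t / s t) (1, 0))) t)
    (hsd : ∀ t, HasDerivAt s (ε * deriv F (ε * S t)) t)
    (hS : ∀ t, HasDerivAt S
      (fderiv ℝ H (q t, p t / s t) (0, 1) * p t / (s t) ^ 2 - T / s t) t)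
    (σ : ℝ → ℝ) (hσ : ∀ τ, HasDerivAt σ (s (σ τ)) τ) :
    let Q : ℝ → ℝ := fun τ => q (σ τ)
    let ρ : ℝ → ℝ := fun τ => p (σ τ) / s (σ τ)
    let ξ : ℝ → ℝ := fun τ => ε * S (σ τ)
    let sτ : ℝ → ℝ := fun τ => s (σ τ)
    ∀ τ,
      HasDerivAt Q (fderiv ℝ H (Q τ, ρ τ) (0, 1)) τ ∧
      HasDerivAt ρ (-(fderiv ℝ H (Q τ, ρ τ) (1, 0)) - ε * ρ τ * deriv F (ξ τ)) τ ∧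
      HasDerivAt ξ (ε * (-T + ρ τ * fderiv ℝ H (Q τ, ρ τ) (0, 1))) τ ∧
      HasDerivAt sτ (ε * sτ τ * deriv F (ξ τ)) τ :=
  hoover_reduction_general H F T ε q p s S hs hq hp hsd hS σ hσ
end

section
/- Let f(t) = 4 sech(t)², α > 0, and z₀ ∈ ℂ with z₀ ≠ 0. Then the Melnikov function M(t₀) = (1/(2α))·Ω(exp(2iα²t₀)z₀, f̂(α²/π)) (with f̂ the Fourier transform and Ω(z',z) = Im(z'·conj(z))) is a nonzero sinusoidal function of t₀; in particular it has a zero t₀* at which M'(t₀*) ≠ 0. -/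
/-!
The substitution `x = σ(2t)` (`σ` the logistic sigmoid, `1 - σ(u) = σ(u) e^{-u}`) turns
`f̂(α²/π) = ∫ 4 sech² t · e^{-2iα²t} dt` into `8·B(1 - iα², 1 + iα²) = 8·Γ(1 - iα²)·Γ(1 + iα²)`,
which is nonzero because `Γ` has no zeros. Hence `w = z₀·conj f̂ ≠ 0`, and
`M(t₀) = Im(e^{2iα²t₀} w) / (2α)` is a sinusoid of amplitude `‖w‖ / (2α)` that vanishes
transversally at `t₀ = -arg w / (2α²)`, where `e^{2iα²t₀} w = ‖w‖`.
-/

open MeasureTheory Complex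
open Real (sigmoid)

open Real in
theorem Complex.betaIntegral_eq_integral_sigmoid (a b : ℂ) :
    betaIntegral a b = ∫ u : ℝ, (sigmoid u : ℂ) ^ a * ((1 - sigmoid u : ℝ) : ℂ) ^ b := by
  have hsubst := integral_image_eq_integral_abs_deriv_smul MeasurableSet.univ
    (fun u _ => (hasDerivAt_sigmoid u).hasDerivWithinAt) sigmoid_injective.injOn
    (fun x : ℝ => (x : ℂ) ^ (a - 1) * (1 - (x : ℂ)) ^ (b - 1))
  rw [Set.image_univ, range_sigmoid, setIntegral_univ, ← integral_Ioc_eq_integral_Ioo,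
    ← intervalIntegral.integral_of_le zero_le_one] at hsubst
  rw [betaIntegral, hsubst]
  congr 1 with u
  have hσ : (sigmoid u : ℂ) ≠ 0 := ofReal_ne_zero.mpr (sigmoid_pos u).ne'
  have hσ' : 1 - (sigmoid u : ℂ) ≠ 0 := by
    rw [← ofReal_one, ← ofReal_sub]; exact ofReal_ne_zero.mpr (sub_pos.mpr (sigmoid_lt_one u)).ne'
  rw [abs_of_pos (mul_pos (sigmoid_pos u) (sub_pos.mpr (sigmoid_lt_one u))), real_smul]
  push_cast
  rw [cpow_sub _ _ hσ, cpow_sub _ _ hσ', cpow_one, cpow_one]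
  field_simp

theorem Real.sigmoid_cpow_one_sub_mul_cpow_one_add (u : ℝ) (z : ℂ) :
    (sigmoid u : ℂ) ^ (1 - z) * ((1 - sigmoid u : ℝ) : ℂ) ^ (1 + z) =
      ((sigmoid u * (1 - sigmoid u) : ℝ) : ℂ) * Complex.exp (-u * z) := by
  have hσ := sigmoid_pos u
  have hσ' : 0 < 1 - sigmoid u := sub_pos.mpr (sigmoid_lt_one u)
  have hlog : Real.log (1 - sigmoid u) = Real.log (sigmoid u) - u := by
    rw [← sigmoid_neg, ← sigmoid_mul_rexp_neg, Real.log_mul hσ.ne' (Real.exp_pos _).ne',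
      Real.log_exp, sub_eq_add_neg]
  have hexp : ∀ x : ℝ, 0 < x → (x : ℂ) = Complex.exp (Real.log x) := fun x hx => by
    rw [← ofReal_exp, exp_log hx]
  rw [cpow_def_of_ne_zero (ofReal_ne_zero.mpr hσ.ne'),
    cpow_def_of_ne_zero (ofReal_ne_zero.mpr hσ'.ne'), ← ofReal_log hσ.le, ← ofReal_log hσ'.le,
    ofReal_mul, hexp _ hσ, hexp _ hσ', hlog, ← Complex.exp_add, ← Complex.exp_add,
    ← Complex.exp_add]
  push_cast
  ring_nf

theorem integral_sigmoid_mul_one_sub_sigmoid_mul_cexp {z : ℂ} (hz₁ : z.re < 1) (hz₂ : -1 < z.re) :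
    ∫ u : ℝ, ((sigmoid u * (1 - sigmoid u) : ℝ) : ℂ) * exp (-u * z) =
      Gamma (1 - z) * Gamma (1 + z) := by
  have h := Gamma_mul_Gamma_eq_betaIntegral (s := 1 - z) (t := 1 + z)
    (by simpa using hz₁) (by simp; linarith)
  rw [show 1 - z + (1 + z) = 2 by ring, Gamma_ofNat_eq_factorial 1, Nat.factorial_one,
    Nat.cast_one, one_mul] at h
  simp only [h, betaIntegral_eq_integral_sigmoid, Real.sigmoid_cpow_one_sub_mul_cpow_one_add]

theorem Real.four_div_cosh_sq (t : ℝ) :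
    4 / cosh t ^ 2 = 16 * (sigmoid (2 * t) * (1 - sigmoid (2 * t))) := by
  rw [← sigmoid_neg, sigmoid_def, sigmoid_def, cosh_eq]
  have h2 : exp (-(2 * t)) = exp (-t) ^ 2 := by rw [← exp_nat_mul]; ring_nf
  have h2' : exp (-(-(2 * t))) = exp t ^ 2 := by rw [← exp_nat_mul]; ring_nf
  rw [h2, h2', exp_neg]
  field_simp
  ring

theorem integral_four_div_cosh_sq_mul_cexp {z : ℂ} (hz₁ : z.re < 1) (hz₂ : -1 < z.re) :
    ∫ t : ℝ, ((4 / Real.cosh t ^ 2 : ℝ) : ℂ) * exp (-2 * t * z) =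
      8 * (Gamma (1 - z) * Gamma (1 + z)) := by
  have h := Measure.integral_comp_mul_left
    (fun u : ℝ => ((sigmoid u * (1 - sigmoid u) : ℝ) : ℂ) * exp (-u * z)) 2
  rw [integral_sigmoid_mul_one_sub_sigmoid_mul_cexp hz₁ hz₂] at h
  calc ∫ t : ℝ, ((4 / Real.cosh t ^ 2 : ℝ) : ℂ) * exp (-2 * t * z)
      = 16 * ∫ t : ℝ,
          ((sigmoid (2 * t) * (1 - sigmoid (2 * t)) : ℝ) : ℂ) * exp (-↑(2 * t) * z) := by
        rw [← integral_const_mul]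
        congr 1 with t
        rw [Real.four_div_cosh_sq]
        push_cast
        ring_nf
    _ = 8 * (Gamma (1 - z) * Gamma (1 + z)) := by
        rw [h, abs_of_pos (by norm_num), real_smul]
        push_cast
        ring

theorem Complex.im_exp_ofReal_mul_I_mul (θ : ℝ) (w : ℂ) :
    (exp (θ * I) * w).im = w.im * Real.cos θ + w.re * Real.sin θ := by
  rw [mul_im, exp_ofReal_mul_I_re, exp_ofReal_mul_I_im]; ring

theorem Complex.re_exp_ofReal_mul_I_mul (θ : ℝ) (w : ℂ) :
    (exp (θ * I) * w).re = w.re * Real.cos θ - w.im * Real.sin θ := by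
  rw [mul_re, exp_ofReal_mul_I_re, exp_ofReal_mul_I_im]; ring

theorem Complex.exp_neg_arg_mul_I_mul_self (w : ℂ) : exp ((-w.arg : ℝ) * I) * w = ‖w‖ := by
  conv_lhs => arg 2; rw [← norm_mul_exp_arg_mul_I w]
  rw [mul_left_comm, ← Complex.exp_add, ofReal_neg, neg_mul, neg_add_cancel, Complex.exp_zero,
    mul_one]

theorem hasDerivAt_im_exp_mul_I_mul (ω : ℝ) (w : ℂ) (t : ℝ) :
    HasDerivAt (fun t : ℝ => (exp ((ω * t : ℝ) * I) * w).im)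
      (ω * (exp ((ω * t : ℝ) * I) * w).re) t := by
  have hθ : HasDerivAt (fun t : ℝ => ω * t) ω t := by simpa using (hasDerivAt_id t).const_mul ω
  simp only [im_exp_ofReal_mul_I_mul, re_exp_ofReal_mul_I_mul]
  exact ((hθ.cos.const_mul w.im).add (hθ.sin.const_mul w.re)).congr_deriv (by ring)

theorem exists_im_exp_mul_I_mul_eq_zero_and_deriv_ne_zero {ω c : ℝ} {w : ℂ} (hω : ω ≠ 0)
    (hc : c ≠ 0) (hw : w ≠ 0) :
    ∃ ts : ℝ, c * (exp ((ω * ts : ℝ) * I) * w).im = 0 ∧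
      deriv (fun t : ℝ => c * (exp ((ω * t : ℝ) * I) * w).im) ts ≠ 0 := by
  have hts : ω * (-w.arg / ω) = -w.arg := by field_simp
  refine ⟨-w.arg / ω, ?_, ?_⟩
  · rw [hts, exp_neg_arg_mul_I_mul_self, ofReal_im, mul_zero]
  · rw [((hasDerivAt_im_exp_mul_I_mul ω w _).const_mul c).deriv, hts,
      exp_neg_arg_mul_I_mul_self, ofReal_re]
    exact mul_ne_zero hc (mul_ne_zero hω (norm_ne_zero_iff.mpr hw))

/-- for `f(t) = 4 sech(t)²`, `α > 0` and `z₀ ≠ 0`, the Melnikov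
function `M(t₀) = (1/(2α))·Ω(exp(2iα²t₀)z₀, f̂(α²/π))` is a nonzero sinusoid;
in particular it has a zero at which its derivative does not vanish. -/
theorem melnikov_nonzero_sinusoid (α : ℝ) (hα : 0 < α) (z₀ : ℂ) (hz₀ : z₀ ≠ 0) :
    let fhat : ℂ := ∫ t : ℝ, ((4 / Real.cosh t ^ 2 : ℝ) : ℂ) *
      Complex.exp (-2 * Real.pi * Complex.I * (α ^ 2 / Real.pi) * t)
    let M : ℝ → ℝ := fun t₀ =>
      (1 / (2 * α)) * (Complex.exp (2 * Complex.I * α ^ 2 * t₀) * z₀ *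
        starRingEnd ℂ fhat).im
    (∃ a b : ℝ, (a ≠ 0 ∨ b ≠ 0) ∧
      ∀ t₀, M t₀ = a * Real.cos (2 * α ^ 2 * t₀) + b * Real.sin (2 * α ^ 2 * t₀)) ∧
    (∃ t₀ : ℝ, M t₀ ≠ 0) ∧
    (∃ ts : ℝ, M ts = 0 ∧ deriv M ts ≠ 0) := by
  intro fhat M
  have hfhat : fhat = 8 * (Gamma (1 - I * α ^ 2) * Gamma (1 + I * α ^ 2)) := by
    rw [← integral_four_div_cosh_sq_mul_cexp (by simp [← ofReal_pow]) (by simp [← ofReal_pow])]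
    refine integral_congr_ae (.of_forall fun t => ?_)
    dsimp only
    field_simp [ofReal_ne_zero.mpr Real.pi_ne_zero]
  have hfhat₀ : fhat ≠ 0 := by
    rw [hfhat]
    refine mul_ne_zero (by norm_num) (mul_ne_zero ?_ ?_) <;>
      exact Gamma_ne_zero_of_re_pos (by simp [← ofReal_pow])
  set w := z₀ * starRingEnd ℂ fhat
  have hw : w ≠ 0 := mul_ne_zero hz₀ ((map_ne_zero _).mpr hfhat₀)
  have hM : M = fun t => 1 / (2 * α) * (exp ((2 * α ^ 2 * t : ℝ) * I) * w).im := by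
    funext t
    simp only [M, w, ← mul_assoc]
    push_cast
    ring_nf
  obtain ⟨ts, hM₀, hM'⟩ : ∃ ts, M ts = 0 ∧ deriv M ts ≠ 0 :=
    hM ▸ exists_im_exp_mul_I_mul_eq_zero_and_deriv_ne_zero (by positivity) (by positivity) hw
  refine ⟨⟨w.im / (2 * α), w.re / (2 * α), ?_, fun t => ?_⟩, ?_, ts, hM₀, hM'⟩
  · by_contra! h
    exact hw (Complex.ext (by simpa [hα.ne'] using h.2) (by simpa [hα.ne'] using h.1))
  · simp only [hM, im_exp_ofReal_mul_I_mul]; ring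
  · by_contra! h
    exact hM' (by rw [show M = fun _ => 0 from funext h, deriv_const])
end
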